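/- arXiv:2205.10654 — 5 statements merged into one kernel-verified Lean document; each statement's English description precedes it below -/
import Mathlib

section
/- Let b1, b2 ∈ (0,1) and q = b1/b2. Let ρ, ζ ∈ [0,1] satisfy q·ρ·(1−ζ) = ζ·(1−ρ). Let (v,h) be independent Bernoulli random variables with P(v=1)=ρ, P(h=1)=ζ. Define (v',h') by: if v=h then (v',h')=(v,h); if (v,h)=(1,0) then (v',h')=(1,0) with probability b1 and (0,1) with probability 1−b1; if (v,h)=(0,1) then (v',h')=(0,1) with probability b2 and (1,0) with probability 1−b2. Then v' and h' are independent with P(v'=1)=ζ and P(h'=1)=ρ. -/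
/-- Stochastic weights of the six vertex configurations: inputs `(v, h)` from
bottom and left, outputs `(v', h')` to top and right. -/
def s6vWeight (b1 b2 : ℝ) : Bool × Bool → Bool × Bool → ℝ
  | (true, true), (true, true) => 1
  | (false, false), (false, false) => 1
  | (true, false), (true, false) => b1
  | (true, false), (false, true) => 1 - b1
  | (false, true), (false, true) => b2
  | (false, true), (true, false) => 1 - b2
  | _, _ => 0

/-- Local pseudo-stationarity: if `(v, h) ∼ Ber(ρ) ⊗ Ber(ζ)` with
`q ρ (1-ζ) = ζ (1-ρ)` where `q = b1/b2`, then `(v', h') ∼ Ber(ζ) ⊗ Ber(ρ)`. -/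
theorem stmt0 (b1 b2 q ρ ζ : ℝ)
    (hb1 : b1 ∈ Set.Ioo (0:ℝ) 1) (hb2 : b2 ∈ Set.Ioo (0:ℝ) 1)
    (hq : q = b1 / b2)
    (hρ : ρ ∈ Set.Icc (0:ℝ) 1) (hζ : ζ ∈ Set.Icc (0:ℝ) 1)
    (hrel : q * ρ * (1 - ζ) = ζ * (1 - ρ)) :
    ∀ o : Bool × Bool,
      (∑ i : Bool × Bool,
        ((if i.1 then ρ else 1 - ρ) * (if i.2 then ζ else 1 - ζ)) * s6vWeight b1 b2 i o)
      = (if o.1 then ζ else 1 - ζ) * (if o.2 then ρ else 1 - ρ) := by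
  have hb2ne : b2 ≠ 0 := ne_of_gt hb2.1
  have key : b1 * ρ * (1 - ζ) = b2 * (ζ * (1 - ρ)) := by
    rw [hq, div_mul_eq_mul_div, div_mul_eq_mul_div, div_eq_iff hb2ne] at hrel
    linarith [hrel]
  intro o
  rcases o with ⟨v, h⟩
  rw [Fintype.sum_prod_type]
  cases v <;> cases h <;>
    norm_num [Fintype.sum_bool, s6vWeight] <;>
    nlinarith [key]
end

section
/- Let b1, b2 ∈ (0,1). Let ρ, ζ ∈ [0,1] satisfy (1−b1)·ρ·(1−ζ) = ζ·(1−ρ)·(1−b2). Let (v,h) be independent Bernoulli random variables with P(v=1)=ρ, P(h=1)=ζ. Define (v',h') by: if v=h then (v',h')=(v,h); if (v,h)=(1,0) then (v',h')=(1,0) with probability b1 and (0,1) with probability 1−b1; if (v,h)=(0,1) then (v',h')=(0,1) with probability b2 and (1,0) with probability 1−b2. Then v' and h' are independent with P(v'=1)=ρ and P(h'=1)=ζ. -/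
/-- Local stationarity: if `(v, h) ∼ Ber(ρ) ⊗ Ber(ζ)` with
`(1-b1) ρ (1-ζ) = ζ (1-ρ) (1-b2)`, then `(v', h') ∼ Ber(ρ) ⊗ Ber(ζ)`. -/
theorem stmt1 (b1 b2 ρ ζ : ℝ)
    (hb1 : b1 ∈ Set.Ioo (0:ℝ) 1) (hb2 : b2 ∈ Set.Ioo (0:ℝ) 1)
    (hρ : ρ ∈ Set.Icc (0:ℝ) 1) (hζ : ζ ∈ Set.Icc (0:ℝ) 1)
    (hrel : (1 - b1) * ρ * (1 - ζ) = ζ * (1 - ρ) * (1 - b2)) :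
    ∀ o : Bool × Bool,
      (∑ i : Bool × Bool,
        ((if i.1 then ρ else 1 - ρ) * (if i.2 then ζ else 1 - ζ)) * s6vWeight b1 b2 i o)
      = (if o.1 then ρ else 1 - ρ) * (if o.2 then ζ else 1 - ζ) := by
  rintro ⟨(_|_), (_|_)⟩ <;>
    · simp only [Fintype.sum_prod_type, Fintype.sum_bool, s6vWeight, if_true, if_false,
        Bool.false_eq_true, Bool.true_eq_false]
      first
      | ring1
      | linear_combination hrel
      | linear_combination -hrel
end

section
/- Fix b1, b2 ∈ (0,1), q = b1/b2, and t ∈ ℤ. Suppose a function E : ℤ → [0,1] satisfies for all y ∈ ℤ the recursion E(y) = (q^{−y+t}/(1+q^{−y+t}))·(E(y−1) + (1−E(y−1))(1−b1)) + (1/(1+q^{−y+t}))·E(y−1)·b2. Then E(y) = q^{−y+t}/(1 + q^{−y+t}) for every y ∈ ℤ. -/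
/-!
Write `a = q^{-y+t}` and `f(y) = a/(1+a)`. Since `b1 = q b2`, the recursion rewrites as
`E(y) - f(y) = ((b2 + a b1)/(1+a)) (E(y-1) - f(y-1))`, and the factor is a convex combination of
`b1` and `b2`, hence at most `max b1 b2 < 1`. Iterating backwards `n` times bounds `|E(y) - f(y)|`
by `(max b1 b2)^n`, because both `E` and `f` take values in `[0,1]`.
-/

open Filter

theorem eq_zero_of_abs_le_mul_abs_sub_one {d : ℤ → ℝ} {m C : ℝ} (hm0 : 0 ≤ m) (hm1 : m < 1)
    (hC : ∀ y, |d y| ≤ C) (hstep : ∀ y, |d y| ≤ m * |d (y - 1)|) (y : ℤ) : d y = 0 := by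
  have hpow : ∀ n : ℕ, ∀ y, |d y| ≤ m ^ n * C := by
    intro n
    induction n with
    | zero => simpa using hC
    | succ k ih =>
      intro y
      calc |d y| ≤ m * |d (y - 1)| := hstep y
        _ ≤ m * (m ^ k * C) := mul_le_mul_of_nonneg_left (ih (y - 1)) hm0
        _ = m ^ (k + 1) * C := by ring
  have hlim : Tendsto (fun n : ℕ => m ^ n * C) atTop (nhds 0) := by
    simpa using (tendsto_pow_atTop_nhds_zero_of_lt_one hm0 hm1).mul_const C
  exact abs_nonpos_iff.mp (ge_of_tendsto' hlim fun n => hpow n y)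

theorem div_one_add_mem_Icc {a : ℝ} (ha : 0 ≤ a) : a / (1 + a) ∈ Set.Icc (0 : ℝ) 1 :=
  ⟨by positivity, (div_le_one (by positivity)).mpr (by linarith)⟩

theorem current_recursion_sub_fixedPoint {a q b1 b2 e : ℝ} (ha : 0 ≤ a) (hq : 0 ≤ q)
    (hb : b1 = q * b2) :
    a / (1 + a) * (e + (1 - e) * (1 - b1)) + 1 / (1 + a) * (e * b2) - a / (1 + a)
      = (b2 + a * b1) / (1 + a) * (e - a * q / (1 + a * q)) := by
  have h1 : 1 + a ≠ 0 := by positivity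
  have h2 : 1 + a * q ≠ 0 := by positivity
  subst hb
  field_simp
  ring

theorem weighted_mean_le_max {a b1 b2 : ℝ} (ha : 0 ≤ a) :
    (b2 + a * b1) / (1 + a) ≤ max b1 b2 := by
  rw [div_le_iff₀ (by positivity)]
  nlinarith [le_max_left b1 b2, le_max_right b1 b2]

/-- If `E : ℤ → [0,1]` satisfies the current recursion
`E(y) = (q^{-y+t}/(1+q^{-y+t})) (E(y-1) + (1-E(y-1))(1-b1)) + (1/(1+q^{-y+t})) E(y-1) b2`
for all `y`, where `q = b1/b2` and `b1, b2 ∈ (0,1)`, then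
`E(y) = q^{-y+t}/(1+q^{-y+t})` for every `y`. -/
theorem stmt5 (b1 b2 q : ℝ)
    (hb1 : b1 ∈ Set.Ioo (0:ℝ) 1) (hb2 : b2 ∈ Set.Ioo (0:ℝ) 1)
    (hq : q = b1 / b2) (t : ℤ) (E : ℤ → ℝ)
    (hE : ∀ y : ℤ, E y ∈ Set.Icc (0:ℝ) 1)
    (hrec : ∀ y : ℤ,
      E y = (q ^ (-y + t) / (1 + q ^ (-y + t))) * (E (y-1) + (1 - E (y-1)) * (1 - b1))
            + (1 / (1 + q ^ (-y + t))) * (E (y-1) * b2)) :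
    ∀ y : ℤ, E y = q ^ (-y + t) / (1 + q ^ (-y + t)) := by
  obtain ⟨hb1p, hb1l⟩ := hb1
  obtain ⟨hb2p, hb2l⟩ := hb2
  have hqpos : 0 < q := hq ▸ div_pos hb1p hb2p
  have hb : b1 = q * b2 := by rw [hq, div_mul_cancel₀ _ hb2p.ne']
  set f : ℤ → ℝ := fun y => q ^ (-y + t) / (1 + q ^ (-y + t))
  have hf : ∀ y, f y ∈ Set.Icc (0 : ℝ) 1 := fun y => div_one_add_mem_Icc (zpow_pos hqpos _).le
  have hbounded : ∀ y, |E y - f y| ≤ 1 := fun y => by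
    rw [abs_le]; constructor <;> linarith [(hE y).1, (hE y).2, (hf y).1, (hf y).2]
  have hstep : ∀ y, |E y - f y| ≤ max b1 b2 * |E (y - 1) - f (y - 1)| := by
    intro y
    have ha := zpow_pos hqpos (-y + t)
    have hshift : q ^ (-(y - 1) + t) = q ^ (-y + t) * q := by
      rw [show -(y - 1) + t = (-y + t) + 1 by ring, zpow_add_one₀ hqpos.ne']
    rw [hrec y, current_recursion_sub_fixedPoint ha.le hqpos.le hb, abs_mul,
      abs_of_nonneg (by positivity)]
    simp only [f, hshift]
    exact mul_le_mul_of_nonneg_right (weighted_mean_le_max ha.le) (abs_nonneg _)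
  intro y
  exact sub_eq_zero.mp (eq_zero_of_abs_le_mul_abs_sub_one (le_max_of_le_left hb1p.le)
    (max_lt hb1l hb2l) hbounded hstep y)
end

section
/- Let q > 0, I ≥ 1, ρ ∈ [0,1], and for x ∈ ℤ set ρ(x) = ρ·q^{(I−1−x) mod I} / (1 − ρ + ρ·q^{(I−1−x) mod I}), and for t ∈ ℤ_{≥0} set ζ(t) = −αρq^{I}q^{t mod J} / (1 − ρ − αρq^{I}q^{t mod J}). With b1(x,t), b2(x,t) as in the unfused higher spin model, the identity ρ(x)·(1 − b1(x,t))·(1 − ζ(t)) = ζ(t)·(1 − b2(x,t))·(1 − ρ(x)) holds for all x ∈ ℤ and t ∈ ℤ_{≥0}. -/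
/-- `β(x,t) = (x mod I) + (t mod J)`. -/
def betaExp (I J : ℕ) (x : ℤ) (t : ℕ) : ℤ := x % (I : ℤ) + ((t % J : ℕ) : ℤ)

/-- `b1(x,t) = (1 + α q^{β(x,t)+1}) / (1 + α q^{β(x,t)})`. -/
noncomputable def b1f (I J : ℕ) (q α : ℝ) (x : ℤ) (t : ℕ) : ℝ :=
  (1 + α * q ^ (betaExp I J x t + 1)) / (1 + α * q ^ betaExp I J x t)

/-- `b2(x,t) = (α q^{β(x,t)} + q^{-1}) / (1 + α q^{β(x,t)})`. -/
noncomputable def b2f (I J : ℕ) (q α : ℝ) (x : ℤ) (t : ℕ) : ℝ :=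
  (α * q ^ betaExp I J x t + q⁻¹) / (1 + α * q ^ betaExp I J x t)

/-- `ρ(x) = ρ q^{(I-1-x) mod I} / (1 - ρ + ρ q^{(I-1-x) mod I})`. -/
noncomputable def rhoX (I : ℕ) (q ρ : ℝ) (x : ℤ) : ℝ :=
  ρ * q ^ (((I : ℤ) - 1 - x) % (I : ℤ)) / (1 - ρ + ρ * q ^ (((I : ℤ) - 1 - x) % (I : ℤ)))

/-- `ζ(t) = -α ρ q^I q^{t mod J} / (1 - ρ - α ρ q^I q^{t mod J})`. -/
noncomputable def zetaT (I J : ℕ) (q α ρ : ℝ) (t : ℕ) : ℝ :=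
  -α * ρ * q ^ (I : ℤ) * q ^ (((t % J : ℕ) : ℤ)) /
    (1 - ρ - α * ρ * q ^ (I : ℤ) * q ^ (((t % J : ℕ) : ℤ)))

/-! With `u = q^{(I-1-x) mod I}` and `w = q^{β(x,t)}` one has `u q w = q^I q^{t mod J}`, because
`((I-1-x) mod I) + 1 + (x mod I) = I`. Under this relation the odds `ρ(x)/(1-ρ(x)) = ρu/(1-ρ)` and
`ζ(t)/(1-ζ(t)) = -αρ u q w/(1-ρ)` differ exactly by the factor
`-α w q = (1-b1)/(1-b2)`, and that is the identity divided by `(1-ρ(x))(1-ζ(t))(1-b2)`.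
The stochasticity conditions only serve to keep the denominators away from zero. -/

theorem Int.sub_one_sub_emod_add_one_add_emod {n : ℤ} (hn : 0 < n) (x : ℤ) :
    (n - 1 - x) % n + 1 + x % n = n := by
  have hx := Int.emod_add_mul_ediv x n
  have h0 := Int.emod_nonneg x hn.ne'
  have hlt := Int.emod_lt_of_pos x hn
  rw [show n - 1 - x = (n - 1 - x % n) + n * -(x / n) by linarith, Int.add_mul_emod_self_left,
    Int.emod_eq_of_lt (by linarith) (by linarith)]
  ring

theorem local_stationarity_of_mul_eq {K : Type*} [Field K] {q α ρ u w T S : K} (hq : q ≠ 0)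
    (hw : 1 + α * w ≠ 0) (hu : 1 - ρ + ρ * u ≠ 0) (hv : 1 - ρ - α * ρ * T * S ≠ 0)
    (hTS : u * q * w = T * S) :
    ρ * u / (1 - ρ + ρ * u) * (1 - (1 + α * (w * q)) / (1 + α * w)) *
        (1 - -α * ρ * T * S / (1 - ρ - α * ρ * T * S)) =
      -α * ρ * T * S / (1 - ρ - α * ρ * T * S) * (1 - (α * w + q⁻¹) / (1 + α * w)) *
        (1 - ρ * u / (1 - ρ + ρ * u)) := by
  generalize hD : 1 - ρ - α * ρ * T * S = D at hv ⊢
  field_simp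
  linear_combination (-ρ * α * (1 - q) * u * q * w) * hD + ρ * α * (1 - q) * (1 - ρ) * hTS

theorem one_sub_add_mul_pos {ρ u : ℝ} (hρ : ρ ∈ Set.Icc (0 : ℝ) 1) (hu : 0 < u) :
    0 < 1 - ρ + ρ * u := by
  obtain ⟨hρ0, hρ1⟩ := hρ
  rcases hρ1.lt_or_eq with hlt | rfl
  · nlinarith
  · simpa using hu

theorem mul_zpow_lt_neg_one {q α : ℝ} {k n : ℤ} (hq0 : 0 < q) (hq1 : q < 1) (hkn : k + n ≤ 0)
    (hα : α < -q ^ n) : α * q ^ k < -1 := by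
  have hone : 1 ≤ q ^ (n + k) := one_le_zpow_of_nonpos₀ hq0 hq1.le (by omega)
  calc α * q ^ k < -q ^ n * q ^ k := mul_lt_mul_of_pos_right hα (zpow_pos hq0 k)
    _ = -q ^ (n + k) := by rw [neg_mul, ← zpow_add₀ hq0.ne']
    _ ≤ -1 := neg_le_neg hone

theorem neg_one_lt_mul_zpow {q α : ℝ} {k n : ℤ} (hq1 : 1 < q) (hkn : k + n ≤ 0)
    (hα : -q ^ n < α) : -1 < α * q ^ k := by
  have hq0 : 0 < q := zero_lt_one.trans hq1
  have hle : q ^ (n + k) ≤ 1 := zpow_le_one_of_nonpos₀ hq1.le (by omega)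
  calc -1 ≤ -q ^ (n + k) := neg_le_neg hle
    _ = -q ^ n * q ^ k := by rw [neg_mul, ← zpow_add₀ hq0.ne']
    _ < α * q ^ k := mul_lt_mul_of_pos_right hα (zpow_pos hq0 k)

theorem betaExp_le (I J : ℕ) (hI : 1 ≤ I) (hJ : 1 ≤ J) (x : ℤ) (t : ℕ) :
    betaExp I J x t ≤ I + J - 2 := by
  have hx := Int.emod_lt_of_pos x (by omega : (0 : ℤ) < I)
  have ht := Nat.mod_lt t (by omega : 0 < J)
  unfold betaExp
  omega

/-- The inhomogeneous local-stationarity identity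
`ρ(x) (1 - b1(x,t)) (1 - ζ(t)) = ζ(t) (1 - b2(x,t)) (1 - ρ(x))` for the unfused
stochastic higher spin six vertex model. -/
theorem stmt13 (I J : ℕ) (hI : 1 ≤ I) (hJ : 1 ≤ J) (q α ρ : ℝ) (hq : 0 < q)
    (hρ : ρ ∈ Set.Icc (0:ℝ) 1)
    (hα : (0 ≤ q ∧ q < 1 ∧ α < -q ^ (-(I:ℤ) - (J:ℤ) + 1)) ∨
          (1 < q ∧ -q ^ (-(I:ℤ) - (J:ℤ) + 1) < α ∧ α < 0)) :
    ∀ (x : ℤ) (t : ℕ),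
      rhoX I q ρ x * (1 - b1f I J q α x t) * (1 - zetaT I J q α ρ t)
        = zetaT I J q α ρ t * (1 - b2f I J q α x t) * (1 - rhoX I q ρ x) := by
  intro x t
  have hβ : betaExp I J x t + (-(I : ℤ) - J + 1) ≤ 0 := by
    have := betaExp_le I J hI hJ x t
    omega
  have hw : 1 + α * q ^ betaExp I J x t ≠ 0 := by
    rcases hα with ⟨-, hq1, hα⟩ | ⟨hq1, hα, -⟩
    · linarith [mul_zpow_lt_neg_one hq hq1 hβ hα]
    · linarith [neg_one_lt_mul_zpow hq1 hβ hα]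
  have hα0 : α < 0 := by
    rcases hα with ⟨-, -, hα⟩ | ⟨-, -, hα⟩
    · linarith [zpow_pos hq (-(I : ℤ) - J + 1)]
    · exact hα
  have hu := one_sub_add_mul_pos hρ (zpow_pos hq (((I : ℤ) - 1 - x) % I))
  have hv : 0 < 1 - ρ - α * ρ * q ^ (I : ℤ) * q ^ ((t % J : ℕ) : ℤ) := by
    have := one_sub_add_mul_pos hρ
      (mul_pos (mul_pos (neg_pos.2 hα0) (zpow_pos hq (I : ℤ))) (zpow_pos hq ((t % J : ℕ) : ℤ)))
    linarith
  have hexp := Int.sub_one_sub_emod_add_one_add_emod (by omega : (0 : ℤ) < I) x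
  unfold b1f b2f rhoX zetaT
  rw [zpow_add_one₀ hq.ne']
  refine local_stationarity_of_mul_eq hq.ne' hw hu.ne' hv.ne' ?_
  rw [betaExp]
  conv_rhs => rw [← hexp]
  simp only [zpow_add₀ hq.ne', zpow_one]
  ring
end

section
/- Let q > 0 with q ≠ 1, and let μ* = ⊗_{k∈ℤ} Ber(q^{−k}/(1+q^{−k})) on {0,1}^ℤ with shift τ. Then for every n ∈ ℤ, the conditional measure μ_{(n)} := μ*(· | A_n) satisfies μ_{(n)} ∘ τ^{−1} = μ_{(n−1)}, where A_n = {η : Σ_{i≤0}(1−η(i)) + Σ_{i≥1}η(i) < ∞ and Σ_{i≥1}η(i) − Σ_{i≤0}(1−η(i)) = n}. -/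
/-!
The shift maps `A_n` bijectively onto `A_{n-1}`, so it suffices to show that the image under `τ`
of `μ*` restricted to `A_n` is a constant multiple of `μ*` restricted to `A_{n-1}`: normalising
removes the constant. Each `A_m` is countable (its configurations differ from the step
configuration `1_{i ≤ 0}` at finitely many sites), so `μ*` is purely atomic on it and only atoms
need to be compared. The mass of `{ξ}` is the limit of `∏_{|k| ≤ N} q^{-k ξ(k)} / (1 + q^{-k})`.
The denominators do not depend on `ξ`, and for `η ∈ A_{n-1}` and large `N` the exponents for
`τ⁻¹η` and `η` differ by exactly `n`, so `μ*{τ⁻¹η} = q^{-n} μ*{η}`.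
-/

open MeasureTheory ProbabilityTheory

/-- The left shift `(τη)(i) = η(i+1)` on configurations. -/
def shiftConf (η : ℤ → Bool) : ℤ → Bool := fun i => η (i + 1)

/-- The blocking component `A_n`: configurations with finitely many holes on
`(-∞, 0]`, finitely many particles on `[1, ∞)`, and
`Σ_{i≥1} η(i) - Σ_{i≤0} (1 - η(i)) = n`. -/
def Ablock (n : ℤ) : Set (ℤ → Bool) :=
  {η | {i : ℤ | i ≤ 0 ∧ η i = false}.Finite ∧ {i : ℤ | 1 ≤ i ∧ η i = true}.Finite ∧
    ({i : ℤ | 1 ≤ i ∧ η i = true}.ncard : ℤ) - ({i : ℤ | i ≤ 0 ∧ η i = false}.ncard : ℤ) = n}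

open Filter Topology
open scoped ENNReal

section MeasureLemmas

variable {α β : Type*} [MeasurableSpace α] [MeasurableSpace β] {μ : Measure α}

theorem cond_map_eq_of_map_restrict_eq_smul {f : α → α} (hf : Measurable f) {A B : Set α}
    {c : ℝ≥0∞} (hc0 : c ≠ 0) (hc : c ≠ ∞)
    (h : (μ.restrict A).map f = c • μ.restrict B) : (μ[|A]).map f = μ[|B] := by
  have hA : μ A = c * μ B := by
    simpa [Measure.map_apply hf MeasurableSet.univ] using congr($h Set.univ)
  rw [ProbabilityTheory.cond, ProbabilityTheory.cond, Measure.map_smul, h, smul_smul, hA,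
    ENNReal.mul_inv (.inl hc0) (.inl hc), mul_right_comm, ENNReal.inv_mul_cancel hc0 hc, one_mul]

theorem measure_image_eq_mul_of_countable [MeasurableSingletonClass α] {E : Set α}
    (hE : E.Countable) {g : α → α} (hg : E.InjOn g) {c : ℝ≥0∞}
    (h : ∀ x ∈ E, μ {g x} = c * μ {x}) : μ (g '' E) = c * μ E := by
  have atoms : ∀ f : α → α, E.InjOn f → μ (f '' E) = ∑' x : E, μ {f x} := fun f hf => by
    rw [← Set.biUnion_of_singleton (f '' E), Set.biUnion_image]
    exact measure_biUnion hE (fun x hx y hy hxy => Set.disjoint_singleton.2 (hf.ne hx hy hxy))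
      fun _ _ => measurableSet_singleton _
  conv_rhs => rw [← Set.image_id E, atoms id (Set.injOn_id E)]
  rw [atoms g hg, ← ENNReal.tsum_mul_left]
  exact tsum_congr fun x => h x x.2

theorem tendsto_prod_measure_coord_eq_singleton [MeasurableSingletonClass β]
    {μ : Measure (ℤ → β)} [IsFiniteMeasure μ] (hμ : iIndepFun (fun k (η : ℤ → β) => η k) μ)
    (ξ : ℤ → β) :
    Tendsto (fun N : ℕ => ∏ k ∈ Finset.Icc (-(N : ℤ)) N, μ {η | η k = ξ k}) atTop
      (𝓝 (μ {ξ})) := by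
  set cylinder : ℕ → Set (ℤ → β) := fun N => ⋂ k ∈ Finset.Icc (-(N : ℤ)) N, {η | η k = ξ k}
  have hmeas : ∀ N, NullMeasurableSet (cylinder N) μ := fun N =>
    (Finset.measurableSet_biInter _ fun k _ =>
      measurable_pi_apply k (measurableSet_singleton (ξ k))).nullMeasurableSet
  have hanti : Antitone cylinder := fun M N hMN η hη => by
    simp only [cylinder, Set.mem_iInter, Finset.mem_Icc] at hη ⊢
    exact fun k hk => hη k (by omega)
  have hinter : ⋂ N, cylinder N = {ξ} := by
    ext η
    simp only [cylinder, Set.mem_iInter, Finset.mem_Icc, Set.mem_singleton_iff]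
    exact ⟨fun h => funext fun k => h k.natAbs k (by omega), fun h _ k _ => congrFun h k⟩
  have hprod : ∀ N, μ (cylinder N) = ∏ k ∈ Finset.Icc (-(N : ℤ)) N, μ {η | η k = ξ k} :=
    fun N => hμ.measure_inter_preimage_eq_mul _ fun k _ => measurableSet_singleton (ξ k)
  have := tendsto_measure_iInter_atTop hmeas hanti ⟨0, measure_ne_top μ _⟩
  rwa [hinter, Function.comp_def, funext hprod] at this

end MeasureLemmas

section Configurations

def unshiftConf (η : ℤ → Bool) : ℤ → Bool := fun i => η (i - 1)

theorem shiftConf_unshiftConf (η : ℤ → Bool) : shiftConf (unshiftConf η) = η := by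
  funext i; simp [shiftConf, unshiftConf]

theorem unshiftConf_shiftConf (η : ℤ → Bool) : unshiftConf (shiftConf η) = η := by
  funext i; simp [shiftConf, unshiftConf]

theorem measurable_shiftConf : Measurable shiftConf :=
  measurable_pi_lambda _ fun i => measurable_pi_apply (i + 1)

theorem preimage_shiftConf_eq_image_unshiftConf (S : Set (ℤ → Bool)) :
    shiftConf ⁻¹' S = unshiftConf '' S :=
  (congrFun (Set.image_eq_preimage_of_inverse shiftConf_unshiftConf unshiftConf_shiftConf) S).symm

theorem card_filter_Ico_shiftConf (η : ℤ → Bool) (a b : ℤ) :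
    ((Finset.Ico a b).filter (fun j => shiftConf η j = true)).card
      = ((Finset.Ico (a + 1) (b + 1)).filter (fun j => η j = true)).card := by
  rw [← Finset.map_add_right_Ico, Finset.filter_map, Finset.card_map]
  rfl

variable {η : ℤ → Bool} {a b n m : ℤ}

theorem Ablock_unique (hn : η ∈ Ablock n) (hm : η ∈ Ablock m) : n = m :=
  hn.2.2.symm.trans hm.2.2

theorem exists_window_of_mem_Ablock (hη : η ∈ Ablock n) (a₀ b₀ : ℤ) :
    ∃ a ≤ a₀, ∃ b ≥ b₀, (∀ i < a, η i = true) ∧ ∀ i, b ≤ i → η i = false := by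
  obtain ⟨a, ha⟩ := hη.1.bddBelow
  obtain ⟨b, hb⟩ := hη.2.1.bddAbove
  refine ⟨min a₀ (min a 0), min_le_left _ _, max b₀ (max b 0) + 1, by omega,
    fun i hi => ?_, fun i hi => ?_⟩
  · by_contra h
    have : a ≤ i := ha (show i ∈ {i | i ≤ 0 ∧ η i = false} from ⟨by omega, by simpa using h⟩)
    omega
  · by_contra h
    have : i ≤ b := hb (show i ∈ {i | 1 ≤ i ∧ η i = true} from ⟨by omega, by simpa using h⟩)
    omega

theorem mem_Ablock_of_window (ha : a ≤ 1) (hb : 1 ≤ b) (hlo : ∀ i < a, η i = true)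
    (hhi : ∀ i, b ≤ i → η i = false) :
    η ∈ Ablock (((Finset.Ico a b).filter (fun j => η j = true)).card + a - 1) := by
  have holes : {i | i ≤ 0 ∧ η i = false} = (Finset.Ico a 1).filter (fun j => ¬η j = true) := by
    ext i
    simp only [Set.mem_ofPred_eq, Finset.coe_filter, Finset.mem_Ico, Bool.not_eq_true]
    exact ⟨fun h => ⟨⟨by by_contra! hi; simp [hlo i hi] at h, by omega⟩, h.2⟩,
      fun h => ⟨by omega, h.2⟩⟩
  have particles : {i | 1 ≤ i ∧ η i = true} = (Finset.Ico 1 b).filter (fun j => η j = true) := by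
    ext i
    simp only [Set.mem_ofPred_eq, Finset.coe_filter, Finset.mem_Ico]
    exact ⟨fun h => ⟨⟨h.1, by by_contra! hi; simp [hhi i hi] at h⟩, h.2⟩,
      fun h => ⟨h.1.1, h.2⟩⟩
  refine ⟨holes ▸ Finset.finite_toSet _, particles ▸ Finset.finite_toSet _, ?_⟩
  have split_left := Finset.card_filter_add_card_filter_not (s := Finset.Ico a 1)
    (fun j => η j = true)
  have split_window : ((Finset.Ico a b).filter (fun j => η j = true)).card
      = ((Finset.Ico a 1).filter (fun j => η j = true)).card
        + ((Finset.Ico 1 b).filter (fun j => η j = true)).card := by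
    rw [← Finset.Ico_union_Ico_eq_Ico ha hb, Finset.filter_union, Finset.card_union_of_disjoint
      (Finset.disjoint_filter_filter (Finset.Ico_disjoint_Ico_consecutive a 1 b))]
  rw [Int.card_Ico] at split_left
  rw [holes, particles, Set.ncard_coe_finset, Set.ncard_coe_finset, split_window]
  omega

theorem shiftConf_mem_Ablock_iff : shiftConf η ∈ Ablock (n - 1) ↔ η ∈ Ablock n := by
  constructor
  · intro h
    obtain ⟨a, ha, b, hb, hlo, hhi⟩ := exists_window_of_mem_Ablock h 0 1
    have hτ := mem_Ablock_of_window (by omega) hb hlo hhi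
    have hη := mem_Ablock_of_window (η := η) (a := a + 1) (b := b + 1) (by omega) (by omega)
      (fun i hi => by simpa [shiftConf] using hlo (i - 1) (by omega))
      (fun i hi => by simpa [shiftConf] using hhi (i - 1) (by omega))
    rw [card_filter_Ico_shiftConf] at hτ
    convert hη using 2
    have := Ablock_unique h hτ
    omega
  · intro h
    obtain ⟨a, ha, b, hb, hlo, hhi⟩ := exists_window_of_mem_Ablock h 0 2
    have hη := mem_Ablock_of_window (by omega) (by omega) hlo hhi
    have hτ := mem_Ablock_of_window (η := shiftConf η) (a := a - 1) (b := b - 1) (by omega)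
      (by omega) (fun i hi => hlo (i + 1) (by omega)) (fun i hi => hhi (i + 1) (by omega))
    rw [card_filter_Ico_shiftConf, sub_add_cancel, sub_add_cancel] at hτ
    convert hτ using 2
    have := Ablock_unique h hη
    omega

theorem preimage_shiftConf_Ablock (n : ℤ) : shiftConf ⁻¹' Ablock (n - 1) = Ablock n :=
  Set.ext fun _ => shiftConf_mem_Ablock_iff

theorem countable_Ablock (n : ℤ) : (Ablock n).Countable := by
  refine (Set.countable_range fun s : Finset ℤ => fun i => decide (i ≤ 0) ^^ decide (i ∈ s)).mono ?_
  rintro η ⟨holes, particles, -⟩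
  refine ⟨holes.toFinset ∪ particles.toFinset, funext fun i => ?_⟩
  by_cases hi : i ≤ 0 <;> cases h : η i <;> simp [hi, h] <;> omega

theorem measurableSet_Ablock (n : ℤ) : MeasurableSet (Ablock n) :=
  (countable_Ablock n).measurableSet

end Configurations

section Weights

variable {q : ℝ} {η : ℤ → Bool} {n : ℤ}

noncomputable def blockingWeight (q : ℝ) (k : ℤ) (b : Bool) : ℝ :=
  (if b then q ^ (-k) else 1) / (1 + q ^ (-k))

theorem blockingWeight_nonneg (hq : 0 < q) (k : ℤ) (b : Bool) : 0 ≤ blockingWeight q k b := by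
  unfold blockingWeight; split <;> positivity

theorem prod_blockingWeight (hq : 0 < q) (s : Finset ℤ) (ξ : ℤ → Bool) :
    ∏ k ∈ s, blockingWeight q k (ξ k)
      = q ^ (-∑ k ∈ s with ξ k = true, k) / ∏ k ∈ s, (1 + q ^ (-k)) := by
  simp only [blockingWeight]
  rw [Finset.prod_div_distrib, Finset.prod_ite, Finset.prod_const_one, mul_one]
  simp only [← Real.rpow_intCast, Int.cast_neg, Int.cast_sum, ← Finset.sum_neg_distrib,
    Real.rpow_sum_of_pos hq]

theorem eventually_sum_filter_unshiftConf_eq (hη : η ∈ Ablock (n - 1)) :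
    ∀ᶠ N : ℕ in atTop, ∑ k ∈ Finset.Icc (-(N : ℤ)) N with unshiftConf η k = true, k
      = ∑ k ∈ Finset.Icc (-(N : ℤ)) N with η k = true, k + n := by
  obtain ⟨a, ha, b, hb, hlo, hhi⟩ := exists_window_of_mem_Ablock hη 0 1
  filter_upwards [eventually_ge_atTop (max (-a) b).toNat] with N hN
  replace hN : -a ≤ N ∧ b ≤ N := by omega
  have reindex : ∑ k ∈ Finset.Icc (-(N : ℤ)) N with unshiftConf η k = true, k
      = ∑ j ∈ Finset.Ico (-(N : ℤ) - 1) N with η j = true, (j + 1) := by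
    refine Finset.sum_nbij' (· - 1) (· + 1) ?_ ?_ ?_ ?_ ?_ <;>
      intro k <;> simp only [Finset.mem_filter, Finset.mem_Ico, unshiftConf] <;> grind
  have boundary : ∑ j ∈ Finset.Ico (-(N : ℤ) - 1) N with η j = true, j
      = ∑ k ∈ Finset.Icc (-(N : ℤ)) N with η k = true, k + (-N - 1) := by
    rw [← Finset.insert_Ico_left_eq_Ico_sub_one (by omega : -(N : ℤ) ≤ N),
      ← Finset.Ico_insert_right (by omega : -(N : ℤ) ≤ N), Finset.filter_insert,
      Finset.filter_insert, if_pos (hlo _ (by omega)), if_neg (by simp [hhi N (by omega)]),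
      Finset.sum_insert (by simp), add_comm]
  have count := Ablock_unique hη (mem_Ablock_of_window (a := -N - 1) (b := N) (by omega)
    (by omega) (fun i hi => hlo i (by omega)) (fun i hi => hhi i (by omega)))
  rw [reindex, Finset.sum_add_distrib, boundary, Finset.sum_const, nsmul_one]
  omega

end Weights

section BlockingMeasure

variable {q : ℝ} {μ : Measure (ℤ → Bool)} [IsProbabilityMeasure μ] {η : ℤ → Bool} {n : ℤ}

theorem measure_coord_eq_blockingWeight (hq : 0 < q)
    (hmarg : ∀ k : ℤ, μ {η | η k = true} = ENNReal.ofReal (q ^ (-k) / (1 + q ^ (-k))))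
    (k : ℤ) (b : Bool) : μ {η | η k = b} = ENNReal.ofReal (blockingWeight q k b) := by
  cases b
  · have hcompl : {η : ℤ → Bool | η k = false} = {η | η k = true}ᶜ := by ext; simp
    have hmeas : MeasurableSet {η : ℤ → Bool | η k = true} :=
      measurable_pi_apply (X := fun _ : ℤ => Bool) k (measurableSet_singleton true)
    rw [hcompl, prob_compl_eq_one_sub hmeas,
      hmarg, ← ENNReal.ofReal_one, ← ENNReal.ofReal_sub _ (by positivity)]
    congr 1
    have : 1 + q ^ (-k) ≠ 0 := by positivity
    simp only [blockingWeight, Bool.false_eq_true, if_false]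
    field_simp
    ring
  · simpa [blockingWeight] using hmarg k

theorem tendsto_ofReal_prod_blockingWeight (hq : 0 < q)
    (hindep : iIndepFun (fun k (η : ℤ → Bool) => η k) μ)
    (hmarg : ∀ k : ℤ, μ {η | η k = true} = ENNReal.ofReal (q ^ (-k) / (1 + q ^ (-k))))
    (ξ : ℤ → Bool) :
    Tendsto (fun N : ℕ => ENNReal.ofReal (∏ k ∈ Finset.Icc (-(N : ℤ)) N, blockingWeight q k (ξ k)))
      atTop (𝓝 (μ {ξ})) := by
  simpa only [measure_coord_eq_blockingWeight hq hmarg,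
    ← ENNReal.ofReal_prod_of_nonneg fun k _ => blockingWeight_nonneg hq k _]
    using tendsto_prod_measure_coord_eq_singleton hindep ξ

theorem measure_singleton_unshiftConf (hq : 0 < q)
    (hindep : iIndepFun (fun k (η : ℤ → Bool) => η k) μ)
    (hmarg : ∀ k : ℤ, μ {η | η k = true} = ENNReal.ofReal (q ^ (-k) / (1 + q ^ (-k))))
    (hη : η ∈ Ablock (n - 1)) :
    μ {unshiftConf η} = ENNReal.ofReal (q ^ (-n)) * μ {η} := by
  refine tendsto_nhds_unique (tendsto_ofReal_prod_blockingWeight hq hindep hmarg _) ?_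
  refine (ENNReal.Tendsto.const_mul (tendsto_ofReal_prod_blockingWeight hq hindep hmarg η)
    (Or.inr ENNReal.ofReal_ne_top)).congr' ?_
  filter_upwards [eventually_sum_filter_unshiftConf_eq hη] with N hN
  rw [← ENNReal.ofReal_mul (by positivity), prod_blockingWeight hq, prod_blockingWeight hq, hN,
    neg_add, zpow_add₀ hq.ne']
  ring_nf

theorem map_restrict_Ablock (hq : 0 < q) (hindep : iIndepFun (fun k (η : ℤ → Bool) => η k) μ)
    (hmarg : ∀ k : ℤ, μ {η | η k = true} = ENNReal.ofReal (q ^ (-k) / (1 + q ^ (-k))))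
    (n : ℤ) :
    (μ.restrict (Ablock n)).map shiftConf
      = ENNReal.ofReal (q ^ (-n)) • μ.restrict (Ablock (n - 1)) := by
  ext S hS
  rw [Measure.map_apply measurable_shiftConf hS, Measure.restrict_apply (measurable_shiftConf hS),
    Measure.smul_apply, Measure.restrict_apply hS, smul_eq_mul, ← preimage_shiftConf_Ablock n,
    ← Set.preimage_inter, preimage_shiftConf_eq_image_unshiftConf]
  exact measure_image_eq_mul_of_countable ((countable_Ablock _).mono Set.inter_subset_right)
    (Function.LeftInverse.injective shiftConf_unshiftConf).injOn
    fun η hη => measure_singleton_unshiftConf hq hindep hmarg hη.2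

end BlockingMeasure

theorem stmt19_general (q : ℝ) (hq0 : 0 < q)
    (μ : Measure (ℤ → Bool)) [IsProbabilityMeasure μ]
    (hindep : iIndepFun (fun k (η : ℤ → Bool) => η k) μ)
    (hmarg : ∀ k : ℤ, μ {η | η k = true} = ENNReal.ofReal (q ^ (-k) / (1 + q ^ (-k))))
    (n : ℤ) :
    (ProbabilityTheory.cond μ (Ablock n)).map shiftConf
      = ProbabilityTheory.cond μ (Ablock (n - 1)) :=
  cond_map_eq_of_map_restrict_eq_smul measurable_shiftConf
    (ENNReal.ofReal_pos.2 (zpow_pos hq0 (-n))).ne' ENNReal.ofReal_ne_top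
    (map_restrict_Ablock hq0 hindep hmarg n)

/-- For the blocking product measure `μ* = ⊗_{k∈ℤ} Ber(q^{-k}/(1+q^{-k}))` (`q ≠ 1`),
the conditional measures `μ_{(n)} = μ*(· | A_n)` satisfy `μ_{(n)} ∘ τ^{-1} = μ_{(n-1)}`. -/
theorem stmt19 (q : ℝ) (hq0 : 0 < q) (hq1 : q ≠ 1)
    (μ : Measure (ℤ → Bool)) [IsProbabilityMeasure μ]
    (hindep : iIndepFun (fun k (η : ℤ → Bool) => η k) μ)
    (hmarg : ∀ k : ℤ, μ {η | η k = true} = ENNReal.ofReal (q ^ (-k) / (1 + q ^ (-k))))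
    (n : ℤ) :
    (ProbabilityTheory.cond μ (Ablock n)).map shiftConf
      = ProbabilityTheory.cond μ (Ablock (n - 1)) :=
  stmt19_general q hq0 μ hindep hmarg n
end
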